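/- arXiv:2001.00843 — 6 statements merged into one kernel-verified Lean document; each statement's English description precedes it below -/
import Mathlib

section
/- Let X be a random variable with values in a measurable space 𝒳 and let φ : 𝒳 → ℝ^d be measurable with E[‖φ(X)‖] < ∞. Then there exist n ≤ d+1 points x₁,…,xₙ ∈ 𝒳 with φ(x₁),…,φ(xₙ) in the support of the law of φ(X), and positive weights w₁,…,wₙ, such that E[φ(X)] = Σᵢ wᵢ φ(xᵢ). -/
/-!
Let `μ` be the law of `φ(X)` and `b` its mean. The values of `φ(X)` lying in the support of `μ`
form a set `C` dense in the support, so `b` lies in the closed convex hull of `C`. If `b` were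
not in the convex hull itself, a functional `f` properly separating `b` from the hull (which
exists in finite dimension) would satisfy `f ≤ f b` almost everywhere while `∫ f dμ = f b`;
then `f = f b` on the support, hence on the hull, contradicting properness. Carathéodory's
theorem finally writes `b` as a positive combination of at most `d + 1` points of `C`.
-/

open MeasureTheory

/-- The support of a measure on `ℝ^d`: the set of points all of whose open
neighborhoods have positive measure (equivalently, the smallest closed set of
full measure). -/
def measSupport {d : ℕ} (μ : Measure (Fin d → ℝ)) : Set (Fin d → ℝ) :=
  {y | ∀ U : Set (Fin d → ℝ), IsOpen U → y ∈ U → μ U ≠ 0}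

open Set Module

theorem measSupport_eq_support {d : ℕ} (μ : Measure (Fin d → ℝ)) :
    measSupport μ = μ.support := by
  simp [measSupport, Measure.support_eq_forall_isOpen, pos_iff_ne_zero, imp.swap]

theorem Convex.exists_forall_le_and_exists_lt_of_notMem_interior {E : Type*}
    [AddCommGroup E] [Module ℝ E] [TopologicalSpace E] [IsTopologicalAddGroup E]
    [ContinuousSMul ℝ E] {C : Set E} (hC : Convex ℝ C) (hint : (interior C).Nonempty) {b : E}
    (hb : b ∉ interior C) :
    ∃ f : StrongDual ℝ E, (∀ y ∈ C, f y ≤ f b) ∧ ∃ y ∈ C, f y < f b := by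
  obtain ⟨f, hf⟩ := geometric_hahn_banach_open_point hC.interior isOpen_interior hb
  obtain ⟨a, ha⟩ := hint
  refine ⟨f, fun y hy => ?_, a, interior_subset ha, hf a ha⟩
  have hy' : y ∈ closure (interior C) := by
    rw [hC.closure_interior_eq_closure_of_nonempty_interior ⟨a, ha⟩]
    exact subset_closure hy
  exact closure_minimal (fun x hx => (hf x hx).le) (isClosed_le f.continuous continuous_const) hy'

theorem Convex.exists_forall_le_and_exists_lt_of_mem_affineSpan {E : Type*}
    [NormedAddCommGroup E] [NormedSpace ℝ E] [FiniteDimensional ℝ E] {C : Set E}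
    (hC : Convex ℝ C) {b : E} (hbC : b ∈ affineSpan ℝ C) (hb : b ∉ C) :
    ∃ f : StrongDual ℝ E, (∀ y ∈ C, f y ≤ f b) ∧ ∃ y ∈ C, f y < f b := by
  induction h : finrank ℝ E using Nat.strong_induction_on generalizing E with
  | _ n ih =>
  by_cases hint : (interior C).Nonempty
  · exact hC.exists_forall_le_and_exists_lt_of_notMem_interior hint
      fun h => hb (interior_subset h)
  -- `C` spans a proper affine subspace: recurse in its direction, with origin moved to `b`.
  set W := (affineSpan ℝ C).direction
  have hW : W ≠ ⊤ := by
    rwa [Ne, AffineSubspace.direction_eq_top_iff_of_nonempty ⟨b, hbC⟩,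
      ← hC.interior_nonempty_iff_affineSpan_eq_top]
  have hCW : ∀ y ∈ C, y - b ∈ W := fun y hy =>
    AffineSubspace.vsub_mem_direction (subset_affineSpan ℝ C hy) hbC
  let e : W →ᵃ[ℝ] E := (AffineEquiv.constVAdd ℝ E b).toAffineMap.comp W.subtype.toAffineMap
  have he : ∀ w, e w = b + w := fun w => rfl
  set D : Set W := e ⁻¹' C
  have heD : e '' D = C := image_preimage_eq_of_subset fun y hy =>
    ⟨⟨y - b, hCW y hy⟩, by simp [he]⟩
  have h0D : (0 : W) ∈ affineSpan ℝ D := by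
    rw [← heD, ← AffineSubspace.map_span] at hbC
    obtain ⟨w, hw, hwb⟩ := hbC
    obtain rfl : w = 0 := by simpa [he] using hwb
    exact hw
  obtain ⟨g, hg_le, w, hwD, hg_lt⟩ := ih _ (h ▸ Submodule.finrank_lt hW) (hC.affine_preimage e)
    h0D (by simpa [D, he] using hb) rfl
  obtain ⟨f, hfg, -⟩ := exists_extension_norm_eq W g
  have hf : ∀ w : W, f (e w) = f b + g w := fun w => by rw [he, map_add, hfg]
  refine ⟨f, fun y hy => ?_, e w, hwD, ?_⟩
  · obtain ⟨v, hv, rfl⟩ := heD.symm ▸ hy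
    simpa [hf] using hg_le v hv
  · simpa [hf] using hg_lt

theorem exists_fin_pos_sum_eq_of_mem_convexHull {𝕜 E : Type*} [Field 𝕜] [LinearOrder 𝕜]
    [IsStrictOrderedRing 𝕜] [AddCommGroup E] [Module 𝕜 E] [FiniteDimensional 𝕜 E] {s : Set E}
    {x : E} (hx : x ∈ convexHull 𝕜 s) :
    ∃ n ≤ finrank 𝕜 E + 1, ∃ (z : Fin n → E) (w : Fin n → 𝕜),
      (∀ i, z i ∈ s) ∧ (∀ i, 0 < w i) ∧ ∑ i, w i • z i = x := by
  obtain ⟨ι, _, z, w, hzs, hz_indep, hw_pos, -, hsum⟩ := eq_pos_convex_span_of_mem_convexHull hx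
  let e := Fintype.equivFin ι
  refine ⟨Fintype.card ι, ?_, z ∘ e.symm, w ∘ e.symm, fun i => hzs ⟨_, rfl⟩,
    fun i => hw_pos _, ?_⟩
  · exact hz_indep.card_le_finrank_succ.trans (by gcongr; exact Submodule.finrank_le _)
  · rw [← hsum]
    exact e.symm.sum_comp fun i => w i • z i

namespace MeasureTheory

theorem Measure.support_map_subset_closure_inter_range {Ω E : Type*} [MeasurableSpace Ω]
    [TopologicalSpace E] [HereditarilyLindelofSpace E] [MeasurableSpace E] [OpensMeasurableSpace E]
    (P : Measure Ω) {g : Ω → E} (hg : AEMeasurable g P) :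
    (P.map g).support ⊆ closure ((P.map g).support ∩ range g) := by
  intro y hy
  rw [mem_closure_iff]
  intro U hU hyU
  have hpos : 0 < P.map g (U ∩ (P.map g).support) := by
    rw [measure_inter_conull Measure.support_mem_ae]
    exact (Measure.mem_support_iff_forall y).1 hy U (hU.mem_nhds hyU)
  rw [Measure.map_apply_of_aemeasurable hg
    (hU.measurableSet.inter Measure.isClosed_support.measurableSet)] at hpos
  obtain ⟨ω, hωU, hωsupp⟩ := nonempty_of_measure_ne_zero hpos.ne'
  exact ⟨g ω, hωU, hωsupp, ω, rfl⟩

theorem Measure.support_subset_of_ae_le_apply_integral {E : Type*} [NormedAddCommGroup E]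
    [NormedSpace ℝ E] [CompleteSpace E] [MeasurableSpace E] {μ : Measure E} [IsProbabilityMeasure μ]
    (hμ : Integrable id μ) (f : StrongDual ℝ E) (hf : ∀ᵐ y ∂μ, f y ≤ f (∫ y, y ∂μ)) :
    μ.support ⊆ {y | f y = f (∫ y, y ∂μ)} := by
  have hfi : Integrable (fun y => f y) μ := f.integrable_comp hμ
  have hgap_nonneg : 0 ≤ᵐ[μ] fun y => f (∫ y, y ∂μ) - f y :=
    hf.mono fun y hy => sub_nonneg.2 hy
  have hgap_int : Integrable (fun y => f (∫ y, y ∂μ) - f y) μ := (integrable_const _).sub hfi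
  have hgap_zero : ∫ y, (f (∫ y, y ∂μ) - f y) ∂μ = 0 := by
    have hmean : ∫ y, f y ∂μ = f (∫ y, y ∂μ) := f.integral_comp_comm hμ
    rw [integral_sub (integrable_const _) hfi, hmean]
    simp
  have hgap_ae := (integral_eq_zero_iff_of_nonneg_ae hgap_nonneg hgap_int).1 hgap_zero
  refine Measure.support_subset_of_isClosed (isClosed_eq f.continuous continuous_const) ?_
  filter_upwards [hgap_ae] with y hy
  exact (sub_eq_zero.1 hy).symm

theorem integral_id_mem_convexHull {E : Type*} [NormedAddCommGroup E] [NormedSpace ℝ E]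
    [FiniteDimensional ℝ E] [MeasurableSpace E] [OpensMeasurableSpace E] {μ : Measure E}
    [IsProbabilityMeasure μ] (hμ : Integrable id μ) {T : Set E} (hT : T ⊆ μ.support)
    (hT_dense : μ.support ⊆ closure T) : ∫ y, y ∂μ ∈ convexHull ℝ T := by
  have hae : ∀ᵐ y ∂μ, y ∈ closure (convexHull ℝ T) := by
    filter_upwards [Measure.support_mem_ae] with y hy
    exact closure_mono (subset_convexHull ℝ T) (hT_dense hy)
  have hmem_closure : ∫ y, y ∂μ ∈ closure (convexHull ℝ T) :=
    (convex_convexHull ℝ T).closure.integral_mem isClosed_closure hae hμ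
  by_contra hmem
  obtain ⟨f, hf_le, y₀, hy₀, hf_lt⟩ :=
    (convex_convexHull ℝ T).exists_forall_le_and_exists_lt_of_mem_affineSpan
      (closure_minimal (subset_affineSpan ℝ _) (AffineSubspace.closed_of_finiteDimensional _)
        hmem_closure) hmem
  have hsupp := Measure.support_subset_of_ae_le_apply_integral hμ f <| hae.mono fun y hy =>
    closure_minimal hf_le (isClosed_le f.continuous continuous_const) hy
  have hhull : convexHull ℝ T ⊆ {y | f y = f (∫ y, y ∂μ)} :=
    convexHull_min (hT.trans hsupp) (convex_hyperplane f.isLinear _)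
  exact hf_lt.ne (hhull hy₀)

end MeasureTheory

theorem generalized_tchakaloff_general {d : ℕ} {𝒳 : Type*}
    {Ω : Type*} [MeasurableSpace Ω] (P : Measure Ω) [IsProbabilityMeasure P]
    (X : Ω → 𝒳)
    (φ : 𝒳 → Fin d → ℝ)
    (hint : Integrable (fun ω => φ (X ω)) P) :
    ∃ (n : ℕ), n ≤ d + 1 ∧ ∃ (x : Fin n → 𝒳) (w : Fin n → ℝ),
      (∀ i, φ (x i) ∈ measSupport (P.map (fun ω => φ (X ω)))) ∧
      (∀ i, 0 < w i) ∧
      (∫ ω, φ (X ω) ∂P) = ∑ i, w i • φ (x i) := by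
  set μ := P.map fun ω => φ (X ω)
  have hmeas := hint.aemeasurable
  have : IsProbabilityMeasure μ := Measure.isProbabilityMeasure_map hmeas
  have hμ : Integrable id μ := (integrable_map_measure aestronglyMeasurable_id hmeas).2 hint
  have hmean : ∫ ω, φ (X ω) ∂P = ∫ y, y ∂μ := (integral_map hmeas aestronglyMeasurable_id).symm
  have hbary : ∫ y, y ∂μ ∈ convexHull ℝ (μ.support ∩ range fun ω => φ (X ω)) :=
    integral_id_mem_convexHull hμ inter_subset_left
      (Measure.support_map_subset_closure_inter_range P hmeas)
  obtain ⟨n, hn, z, w, hz, hw, hsum⟩ := exists_fin_pos_sum_eq_of_mem_convexHull hbary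
  choose ω hω using fun i => (hz i).2
  simp only at hω
  refine ⟨n, by simpa using hn, fun i => X (ω i), w, fun i => ?_, hw, ?_⟩
  · simpa only [measSupport_eq_support, hω] using (hz i).1
  · simp only [hω, hmean, hsum]

/-- Generalized Tchakaloff theorem: for a random variable `X` in a measurable space `𝒳`
and a measurable `φ : 𝒳 → ℝ^d` with `E‖φ(X)‖ < ∞`, there are `n ≤ d + 1` points whose
images under `φ` lie in the support of the law of `φ(X)` and positive weights realizing
`E[φ(X)]` as a weighted sum. -/
theorem generalized_tchakaloff {d : ℕ} {𝒳 : Type*} [MeasurableSpace 𝒳]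
    {Ω : Type*} [MeasurableSpace Ω] (P : Measure Ω) [IsProbabilityMeasure P]
    (X : Ω → 𝒳) (hX : Measurable X)
    (φ : 𝒳 → Fin d → ℝ) (hφ : Measurable φ)
    (hint : Integrable (fun ω => φ (X ω)) P) :
    ∃ (n : ℕ), n ≤ d + 1 ∧ ∃ (x : Fin n → 𝒳) (w : Fin n → ℝ),
      (∀ i, φ (x i) ∈ measSupport (P.map (fun ω => φ (X ω)))) ∧
      (∀ i, 0 < w i) ∧
      (∫ ω, φ (X ω) ∂P) = ∑ i, w i • φ (x i) :=
  generalized_tchakaloff_general P X φ hint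
end

section
/- Let Y be an integrable random vector in ℝ^d. Then E[Y] lies in the relative interior of the convex hull of the support of the law of Y. -/
open MeasureTheory Set

theorem measSupport_isClosed {d : ℕ} (μ : Measure (Fin d → ℝ)) :
    IsClosed (measSupport μ) := by
  rw [← isOpen_compl_iff, isOpen_iff_forall_mem_open]
  intro y hy
  simp only [measSupport, Set.mem_compl_iff, Set.mem_setOf_eq] at hy
  push_neg at hy
  obtain ⟨U, hUo, hyU, hU0⟩ := hy
  exact ⟨U, fun z hz hzmem => hzmem U hUo hz hU0, hUo, hyU⟩

theorem measSupport_compl_null {d : ℕ} (μ : Measure (Fin d → ℝ)) :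
    μ (measSupport μ)ᶜ = 0 := by
  have hB := TopologicalSpace.isBasis_countableBasis (Fin d → ℝ)
  have hcb : (TopologicalSpace.countableBasis (Fin d → ℝ)).Countable :=
    TopologicalSpace.countable_countableBasis _
  have hsub : (measSupport μ)ᶜ ⊆
      ⋃₀ {U ∈ TopologicalSpace.countableBasis (Fin d → ℝ) | μ U = 0} := by
    intro y hy
    simp only [measSupport, Set.mem_compl_iff, Set.mem_setOf_eq] at hy
    push_neg at hy
    obtain ⟨U, hUo, hyU, hU0⟩ := hy
    obtain ⟨V, hVB, hyV, hVU⟩ := hB.exists_subset_of_mem_open hyU hUo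
    exact ⟨V, ⟨hVB, measure_mono_null hVU hU0⟩, hyV⟩
  refine measure_mono_null hsub ?_
  rw [measure_sUnion_null_iff (hcb.mono (Set.sep_subset _ _))]
  exact fun U hU => hU.2

/-- Key convex geometry lemma: if every continuous linear functional that is
minimized over a nonempty convex set `C` at `x` is constant on `C`, then `x` lies in the
intrinsic (relative) interior of `C`. -/
theorem aux_mem_intrinsicInterior {E : Type*} [NormedAddCommGroup E] [NormedSpace ℝ E]
    [FiniteDimensional ℝ E] {C : Set E} (hC : Convex ℝ C) (hne : C.Nonempty) {x : E}
    (hx : ∀ f : E →L[ℝ] ℝ, (∀ y ∈ C, f x ≤ f y) → ∀ y ∈ C, f y = f x) :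
    x ∈ intrinsicInterior ℝ C := by
  -- First, x ∈ closure C.
  have hxcl : x ∈ closure C := by
    by_contra h
    obtain ⟨f, u, hfx, hfy⟩ :=
      geometric_hahn_banach_point_closed hC.closure isClosed_closure h
    obtain ⟨y, hy⟩ := hne
    have h1 : ∀ z ∈ C, f x ≤ f z := fun z hz =>
      (hfx.trans (hfy z (subset_closure hz))).le
    have h2 := hx f h1 y hy
    have := hfy y (subset_closure hy)
    linarith
  set W : AffineSubspace ℝ E := affineSpan ℝ C with hW
  have hxW : x ∈ W := by
    have hclosed : IsClosed (W : Set E) := W.closed_of_finiteDimensional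
    have : closure C ⊆ (W : Set E) := by
      rw [← hclosed.closure_eq]
      exact closure_mono (subset_affineSpan ℝ C)
    exact this hxcl
  set V : Submodule ℝ E := W.direction with hV
  -- D : the translate of C by -x, inside V
  set D : Set V := {v : V | (v : E) + x ∈ C} with hD
  have hmemD : ∀ y ∈ C, ∀ h : y - x ∈ V, (⟨y - x, h⟩ : V) ∈ D := by
    intro y hy h
    simp only [hD, Set.mem_setOf_eq, sub_add_cancel]
    exact hy
  have hsubV : ∀ y ∈ C, y - x ∈ V := fun y hy => by
    have := AffineSubspace.vsub_mem_direction (subset_affineSpan ℝ C hy) hxW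
    rwa [vsub_eq_sub] at this
  have hDconv : Convex ℝ D := by
    intro v hv w hw a b ha hb hab
    simp only [hD, Set.mem_setOf_eq] at hv hw ⊢
    have : ((a • v + b • w : V) : E) + x = a • ((v : E) + x) + b • ((w : E) + x) := by
      push_cast
      match_scalars <;> linarith
    rw [this]
    exact hC hv hw ha hb hab
  obtain ⟨y₁, hy₁⟩ := hne
  have hDne : D.Nonempty := ⟨⟨y₁ - x, hsubV y₁ hy₁⟩, hmemD y₁ hy₁ _⟩
  -- affineSpan of D is everything in V
  have hspan : affineSpan ℝ D = ⊤ := by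
    rw [← AffineSubspace.direction_eq_top_iff_of_nonempty
      ((affineSpan_nonempty ℝ).2 hDne), direction_affineSpan]
    -- show vectorSpan ℝ D = ⊤
    apply Submodule.map_injective_of_injective V.injective_subtype
    rw [Submodule.map_subtype_top]
    rw [vectorSpan_def, Submodule.map_span]
    have himg : V.subtype '' (D -ᵥ D) = C -ᵥ C := by
      ext z
      constructor
      · rintro ⟨v, ⟨v₁, hv₁, v₂, hv₂, rfl⟩, rfl⟩
        refine ⟨(v₁ : E) + x, hv₁, (v₂ : E) + x, hv₂, ?_⟩
        simp [vsub_eq_sub]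
      · rintro ⟨c₁, hc₁, c₂, hc₂, rfl⟩
        refine ⟨⟨c₁ - x, hsubV c₁ hc₁⟩ - ⟨c₂ - x, hsubV c₂ hc₂⟩,
          Set.vsub_mem_vsub (hmemD c₁ hc₁ _) (hmemD c₂ hc₂ _), ?_⟩
        simp [vsub_eq_sub]
    rw [himg, ← vectorSpan_def, ← direction_affineSpan, ← hW, ← hV]
  have hintne : (interior D).Nonempty :=
    (hDconv.interior_nonempty_iff_affineSpan_eq_top).2 hspan
  obtain ⟨a₀, ha₀⟩ := hintne
  -- 0 ∈ interior D
  have h0 : (0 : V) ∈ interior D := by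
    by_contra h0
    obtain ⟨g, hg⟩ :=
      geometric_hahn_banach_open_point (hDconv.interior) isOpen_interior h0
    rw [map_zero] at hg
    -- g ≤ 0 on D
    have hle : ∀ v ∈ D, g v ≤ 0 := by
      intro v hv
      have htend : Filter.Tendsto (fun t : ℝ => g (t • a₀ + (1 - t) • v))
          (nhdsWithin 0 (Set.Ioi 0)) (nhds (g v)) := by
        have hc : Continuous fun t : ℝ => g (t • a₀ + (1 - t) • v) := by
          fun_prop
        have := hc.tendsto 0
        simp only [zero_smul, sub_zero, one_smul, zero_add] at this
        exact this.mono_left nhdsWithin_le_nhds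
      refine le_of_tendsto htend ?_
      filter_upwards [Ioo_mem_nhdsGT_of_mem (Set.left_mem_Ico.2 one_pos)] with t ht
      have hmem : t • a₀ + (1 - t) • v ∈ interior D :=
        hDconv.combo_interior_closure_mem_interior ha₀ (subset_closure hv)
          ht.1 (by linarith [ht.2]) (by ring)
      exact (hg _ hmem).le
    -- extend -g to E and contradict hx
    obtain ⟨f, hf, -⟩ := exists_extension_norm_eq V (-g)
    have hfge : ∀ y ∈ C, f x ≤ f y := by
      intro y hy
      have h1 : f y - f x = f (y - x) := (map_sub f y x).symm
      have h2 : f (y - x) = -g ⟨y - x, hsubV y hy⟩ := by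
        have := hf ⟨y - x, hsubV y hy⟩
        simpa using this
      have h3 : g ⟨y - x, hsubV y hy⟩ ≤ 0 := hle _ (hmemD y hy _)
      have : 0 ≤ f y - f x := by rw [h1, h2]; linarith
      linarith
    have hconst := hx f hfge
    -- take the interior point a₀ to get a contradiction
    have ha₀D : a₀ ∈ D := interior_subset ha₀
    have hy₀ : ((a₀ : E) + x) ∈ C := ha₀D
    have heq := hconst _ hy₀
    have hga₀ : g a₀ < 0 := hg a₀ ha₀
    have hfa₀ : f ((a₀ : E)) = -g a₀ := by simpa using hf a₀
    have : f ((a₀ : E) + x) = f (a₀ : E) + f x := map_add f _ _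
    rw [heq, hfa₀] at this
    linarith
  -- conclude using the translation homeomorphism V ≃ₜ W
  have hmemW : ∀ v : V, (v : E) + x ∈ W := fun v => by
    have := AffineSubspace.vadd_mem_of_mem_direction v.2 hxW
    rwa [vadd_eq_add] at this
  have hmemW' : ∀ w : W, (w : E) - x ∈ V := fun w => by
    have := AffineSubspace.vsub_mem_direction w.2 hxW
    rwa [vsub_eq_sub] at this
  let e : V ≃ₜ W :=
    { toFun := fun v => ⟨(v : E) + x, hmemW v⟩
      invFun := fun w => ⟨(w : E) - x, hmemW' w⟩
      left_inv := fun v => by ext; simp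
      right_inv := fun w => by ext; simp
      continuous_toFun := by
        apply Continuous.subtype_mk
        fun_prop
      continuous_invFun := by
        apply Continuous.subtype_mk
        fun_prop }
  rw [mem_intrinsicInterior]
  refine ⟨⟨x, hxW⟩, ?_, rfl⟩
  have hDeq : e ⁻¹' (Subtype.val ⁻¹' C : Set W) = D := by
    ext v
    simp [e, hD]
  have : (0 : V) ∈ e ⁻¹' (interior (Subtype.val ⁻¹' C : Set W)) := by
    rw [Homeomorph.preimage_interior, hDeq]
    exact h0
  have he0 : e 0 = ⟨x, hxW⟩ := by
    ext
    simp [e]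
  rwa [Set.mem_preimage, he0] at this

/-- Lemma 3.1: the expectation of an integrable random vector lies in the relative
interior of the convex hull of the support of its law. -/
theorem mean_mem_intrinsicInterior_convexHull_support {d : ℕ}
    {Ω : Type*} [MeasurableSpace Ω] (P : Measure Ω) [IsProbabilityMeasure P]
    (Y : Ω → Fin d → ℝ) (hY : Measurable Y) (hint : Integrable Y P) :
    (∫ ω, Y ω ∂P) ∈ intrinsicInterior ℝ (convexHull ℝ (measSupport (P.map Y))) := by
  set μ := P.map Y with hμ
  have hprob : IsProbabilityMeasure μ := Measure.isProbabilityMeasure_map hY.aemeasurable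
  set S := measSupport μ with hS
  have hcompl : μ Sᶜ = 0 := measSupport_compl_null μ
  have hSne : S.Nonempty := by
    rcases Set.eq_empty_or_nonempty S with h | h
    · exfalso
      rw [h, Set.compl_empty] at hcompl
      simp [measure_univ] at hcompl
    · exact h
  set m := ∫ ω, Y ω ∂P with hm
  have haeS : ∀ᵐ ω ∂P, Y ω ∈ S := by
    have hmeasS : MeasurableSet Sᶜ := (measSupport_isClosed μ).isOpen_compl.measurableSet
    have hP0 : P (Y ⁻¹' Sᶜ) = 0 := by
      rw [← Measure.map_apply hY hmeasS]
      exact hcompl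
    rw [ae_iff]
    exact hP0
  apply aux_mem_intrinsicInterior (convex_convexHull ℝ S)
    ⟨hSne.choose, subset_convexHull ℝ S hSne.choose_spec⟩
  intro f hf
  have hfS : ∀ y ∈ S, f m ≤ f y := fun y hy => hf y (subset_convexHull ℝ S hy)
  have hfcomp : Integrable (fun ω => f (Y ω)) P := f.integrable_comp hint
  have hmean : ∫ ω, f (Y ω) ∂P = f m := f.integral_comp_comm hint
  set g : Ω → ℝ := fun ω => f (Y ω) - f m with hg
  have hgint : Integrable g P := hfcomp.sub (integrable_const _)
  have hg0 : 0 ≤ᵐ[P] g := by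
    filter_upwards [haeS] with ω hω
    simpa [hg] using hfS _ hω
  have hint0 : ∫ ω, g ω ∂P = 0 := by
    simp only [hg]
    rw [integral_sub hfcomp (integrable_const _), hmean, integral_const]
    simp
  have hae : g =ᵐ[P] 0 := (integral_eq_zero_iff_of_nonneg_ae hg0 hgint).1 hint0
  have haefm : ∀ᵐ ω ∂P, f (Y ω) = f m := by
    filter_upwards [hae] with ω hω
    have : f (Y ω) - f m = 0 := hω
    linarith
  -- transfer to μ
  have hmeasN : MeasurableSet {y : Fin d → ℝ | f y ≠ f m} :=
    (f.continuous.measurable (measurableSet_singleton (f m))).compl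
  have hnull : μ {y | f y ≠ f m} = 0 := by
    rw [hμ, Measure.map_apply hY hmeasN]
    rw [ae_iff] at haefm
    exact haefm
  -- S ⊆ {y | f y = f m}
  have hSsub : S ⊆ {y | f y = f m} := by
    intro y hyS
    by_contra hne
    refine hyS {y | f y ≠ f m} ?_ hne hnull
    exact (isClosed_singleton.preimage f.continuous).isOpen_compl
  intro y hy
  have hconv : Convex ℝ {y : Fin d → ℝ | f y = f m} := by
    have : {y : Fin d → ℝ | f y = f m} = f ⁻¹' {f m} := rfl
    rw [this]
    exact (convex_singleton (f m)).linear_preimage (f : (Fin d → ℝ) →ₗ[ℝ] ℝ)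
  exact convexHull_min hSsub hconv hy
end

section
/- Let X₁, X₂, … be i.i.d. copies of a random variable X with values in a measurable space 𝒳, and let φ : 𝒳 → ℝ^d be measurable with E[‖φ(X)‖] < ∞. Then, with probability 1, there exists a positive integer N such that E[φ(X)] is contained in the convex hull of {φ(X₁),…,φ(X_N)}. -/
/-!
Write `Y = φ(X)` and `m = E[Y]`. Let `W` be the space of functionals `f` with `f(Y) = f(m)` almost
surely; almost surely every sample lies in the affine subspace `U` on which all of `W` is constant.
For a functional `g ∉ W`, `E[g(Y)] = g(m)` forces `g(Y) < g(m)` with positive probability, and this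
persists on a fixed set of positive measure for all functionals near `g`. Compactness of the unit
sphere of a complement `W'` of `W` then gives finitely many sets `A₁, …, Aₖ` of positive probability
such that every nonzero `g ∈ W'` is below `g(m)` on one of them. If the samples hit `U` and every
`U ∩ Aⱼ`, no functional separates `m` from them, so `m` lies in their convex hull; and each of these
finitely many events of positive probability eventually happens for an i.i.d. sequence.
-/

open MeasureTheory ProbabilityTheory Filter Topology Metric Set

section ConvexSupport

variable {E : Type*} [NormedAddCommGroup E] [NormedSpace ℝ E]

theorem exists_forall_lt_of_notMem_convexHull {s : Set E} (hs : s.Finite) {c : E}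
    (hc : c ∉ convexHull ℝ s) : ∃ f : E →L[ℝ] ℝ, ∀ x ∈ s, f c < f x := by
  obtain ⟨f, u, hfc, hfu⟩ := geometric_hahn_banach_point_closed (convex_convexHull ℝ s)
    (hs.isCompact_convexHull ℝ).isClosed hc
  exact ⟨f, fun x hx => hfc.trans (hfu x (subset_convexHull ℝ s hx))⟩

variable [MeasurableSpace E]

def aeConstDual (ν : Measure E) (c : E) : Submodule ℝ (E →L[ℝ] ℝ) where
  carrier := {f | ∀ᵐ x ∂ν, f x = f c}
  add_mem' {f g} (hf : ∀ᵐ x ∂ν, f x = f c) (hg : ∀ᵐ x ∂ν, g x = g c) :=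
    show ∀ᵐ x ∂ν, (f + g) x = (f + g) c from hf.mp (hg.mono fun x hgx hfx => by simp [hfx, hgx])
  zero_mem' := by simp
  smul_mem' a f (hf : ∀ᵐ x ∂ν, f x = f c) :=
    show ∀ᵐ x ∂ν, (a • f) x = (a • f) c from hf.mono fun x hfx => by simp [hfx]

theorem ae_forall_mem_aeConstDual [FiniteDimensional ℝ E] (ν : Measure E) (c : E) :
    ∀ᵐ x ∂ν, ∀ f ∈ aeConstDual ν c, f x = f c := by
  let b := Module.Basis.ofVectorSpace ℝ (aeConstDual ν c)
  filter_upwards [ae_all_iff.2 fun i => (b i).2] with x hx f hf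
  let eval : aeConstDual ν c →ₗ[ℝ] ℝ :=
    (ContinuousLinearMap.apply ℝ ℝ (x - c)).toLinearMap ∘ₗ (aeConstDual ν c).subtype
  have heval : eval = 0 := b.ext fun i => by simp [eval, hx i]
  simpa [eval, sub_eq_zero] using LinearMap.congr_fun heval ⟨f, hf⟩

theorem measure_lt_apply_integral_pos [CompleteSpace E] {ν : Measure E} [IsProbabilityMeasure ν]
    (hν : Integrable id ν) {f : E →L[ℝ] ℝ} (hf : f ∉ aeConstDual ν (∫ x, x ∂ν)) :
    0 < ν {x | f x < f (∫ x, x ∂ν)} := by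
  set m := ∫ x, x ∂ν
  refine pos_iff_ne_zero.2 fun hnull => hf ?_
  have hnonneg : 0 ≤ᵐ[ν] fun x => f x - f m := by
    filter_upwards [measure_eq_zero_iff_ae_notMem.1 hnull] with x hx
    simpa using hx
  have hfint : Integrable (fun x => f x) ν := f.integrable_comp hν
  have hint : Integrable (fun x => f x - f m) ν := hfint.sub (integrable_const _)
  have hzero : ∫ x, f x - f m ∂ν = 0 := by
    rw [integral_sub hfint (integrable_const _), integral_const,
      show ∫ x, f x ∂ν = f m from f.integral_comp_comm hν]
    simp
  filter_upwards [(integral_eq_zero_iff_of_nonneg_ae hnonneg hint).1 hzero] with x hx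
  exact sub_eq_zero.1 hx

theorem exists_measure_pos_eventually_forall_lt [OpensMeasurableSpace E] {ν : Measure E} {c : E}
    {f : E →L[ℝ] ℝ} (hf : 0 < ν {x | f x < f c}) :
    ∃ A, MeasurableSet A ∧ 0 < ν A ∧ ∀ᶠ g in 𝓝 f, ∀ x ∈ A, g x < g c := by
  -- the slack `‖x - c‖ / (n + 1)` absorbs any perturbation of `f` of norm `< 1 / (n + 1)`
  let A : ℕ → Set E := fun n => {x | f x + ‖x - c‖ / (n + 1) < f c}
  have hcover : {x | f x < f c} ⊆ ⋃ n, A n := by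
    intro x hx
    obtain ⟨n, hn⟩ := exists_nat_gt (‖x - c‖ / (f c - f x))
    have hgap : 0 < f c - f x := sub_pos.2 hx
    refine mem_iUnion.2 ⟨n, ?_⟩
    have : ‖x - c‖ / (n + 1) < f c - f x := by
      rw [div_lt_iff₀ (by positivity)]
      rw [div_lt_iff₀ hgap] at hn
      nlinarith
    simp only [A, mem_ofPred_eq]
    linarith
  obtain ⟨n, hn⟩ : ∃ n, 0 < ν (A n) := by
    by_contra! h
    exact hf.ne' (measure_mono_null hcover (measure_iUnion_null fun n => nonpos_iff_eq_zero.1 (h n)))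
  refine ⟨A n, measurableSet_lt (by fun_prop) (by fun_prop), hn, ?_⟩
  filter_upwards [ball_mem_nhds f (by positivity : (0 : ℝ) < 1 / (n + 1))] with g hg x hx
  have hgf : (g - f) (x - c) ≤ ‖x - c‖ / (n + 1) := by
    calc (g - f) (x - c) ≤ ‖g - f‖ * ‖x - c‖ := (le_abs_self _).trans ((g - f).le_opNorm _)
      _ ≤ 1 / (n + 1) * ‖x - c‖ := by
        gcongr
        exact (mem_ball_iff_norm.1 hg).le
      _ = ‖x - c‖ / (n + 1) := by ring
  simp only [sub_apply, map_sub] at hgf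
  simp only [A, mem_ofPred_eq] at hx
  linarith

theorem exists_finset_forall_apply_lt_of_isCompl [FiniteDimensional ℝ E]
    [OpensMeasurableSpace E] {ν : Measure E} [IsProbabilityMeasure ν] (hν : Integrable id ν)
    {W' : Submodule ℝ (E →L[ℝ] ℝ)} (hW' : IsCompl (aeConstDual ν (∫ x, x ∂ν)) W') :
    ∃ 𝓐 : Finset (Set E), (∀ A ∈ 𝓐, MeasurableSet A ∧ 0 < ν A) ∧
      ∀ g ∈ W', g ≠ 0 → ∃ A ∈ 𝓐, ∀ x ∈ A, g x < g (∫ x, x ∂ν) := by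
  set m := ∫ x, x ∂ν
  set K := (W' : Set (E →L[ℝ] ℝ)) ∩ sphere 0 1
  have hK : IsCompact K := (isCompact_sphere 0 1).inter_left W'.closed_of_finiteDimensional
  have hK_pos : ∀ g ∈ K, 0 < ν {x | g x < g m} := fun g hg =>
    measure_lt_apply_integral_pos hν fun hgW => by
      have : g = 0 := Submodule.disjoint_def.1 hW'.disjoint g hgW hg.1
      simpa [this] using hg.2
  choose A hA_meas hA_pos hA_nhds using
    fun g (hg : g ∈ K) => exists_measure_pos_eventually_forall_lt (hK_pos g hg)
  obtain ⟨t, htK⟩ := hK.elim_nhds_subcover' _ hA_nhds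
  refine ⟨t.image fun g : K => A g g.2, ?_, fun g hg hg0 => ?_⟩
  · simp only [Finset.forall_mem_image]
    exact fun g _ => ⟨hA_meas g g.2, hA_pos g g.2⟩
  have hgK : ‖g‖⁻¹ • g ∈ K := ⟨W'.smul_mem _ hg, by simp [norm_smul, hg0]⟩
  obtain ⟨g₀, hg₀t, hg₀⟩ := mem_iUnion₂.1 (htK hgK)
  refine ⟨A g₀ g₀.2, Finset.mem_image_of_mem _ hg₀t, fun x hx => ?_⟩
  have h := hg₀ x hx
  simp only [smul_apply, smul_eq_mul] at h
  exact (mul_lt_mul_iff_right₀ (inv_pos.2 (norm_pos_iff.2 hg0))).1 h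

theorem exists_finset_integral_mem_convexHull [FiniteDimensional ℝ E] [OpensMeasurableSpace E]
    (ν : Measure E) [IsProbabilityMeasure ν] (hν : Integrable id ν) :
    ∃ 𝓑 : Finset (Set E), (∀ B ∈ 𝓑, MeasurableSet B ∧ 0 < ν B) ∧
      ∀ z : Set E → E, (∀ B ∈ 𝓑, z B ∈ B) → ∫ x, x ∂ν ∈ convexHull ℝ (z '' 𝓑) := by
  set m := ∫ x, x ∂ν
  set W := aeConstDual ν m
  set U : Set E := {x | ∀ f ∈ W, f x = f m}
  have hU_meas : MeasurableSet U := by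
    simp only [U, ofPred_forall]
    exact (isClosed_biInter fun f _ => isClosed_eq f.continuous continuous_const).measurableSet
  have hU_conull : ν Uᶜ = 0 := ae_forall_mem_aeConstDual ν m
  obtain ⟨W', hWW'⟩ := W.exists_isCompl
  obtain ⟨𝓐, h𝓐, h𝓐_lt⟩ := exists_finset_forall_apply_lt_of_isCompl hν hWW'
  -- `U` itself belongs to the family so that a separating `w'` below cannot vanish
  set 𝓑 := insert U (𝓐.image (U ∩ ·))
  refine ⟨𝓑, ?_, fun z hz => ?_⟩
  · simp only [𝓑, Finset.forall_mem_insert, Finset.forall_mem_image]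
    refine ⟨⟨hU_meas, ?_⟩, fun A hA => ⟨hU_meas.inter (h𝓐 A hA).1, ?_⟩⟩
    · simp [(prob_compl_eq_zero_iff hU_meas).1 hU_conull]
    · rw [inter_comm, measure_inter_conull hU_conull]
      exact (h𝓐 A hA).2
  have hzU : ∀ B ∈ 𝓑, z B ∈ U := by
    simp only [𝓑, Finset.forall_mem_insert, Finset.forall_mem_image]
    exact ⟨hz U (Finset.mem_insert_self _ _),
      fun A hA => (hz _ (Finset.mem_insert_of_mem (Finset.mem_image_of_mem _ hA))).1⟩
  by_contra hm
  obtain ⟨f, hf⟩ := exists_forall_lt_of_notMem_convexHull ((Finset.finite_toSet _).image z) hm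
  obtain ⟨w, hw, w', hw', rfl⟩ := Submodule.mem_sup.1
    (hWW'.sup_eq_top.symm ▸ Submodule.mem_top : f ∈ W ⊔ W')
  -- on `U` the component `w ∈ W` is constant, so `w'` alone separates `m` from the samples
  have hw'lt : ∀ B ∈ 𝓑, w' m < w' (z B) := by
    intro B hB
    have := hf _ (mem_image_of_mem z hB)
    simp only [add_apply, hzU B hB w hw] at this
    linarith
  have hw'0 : w' ≠ 0 := by
    rintro rfl
    exact lt_irrefl _ (hw'lt U (Finset.mem_insert_self _ _))
  obtain ⟨A, hA, hA_lt⟩ := h𝓐_lt w' hw' hw'0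
  have hB : U ∩ A ∈ 𝓑 := Finset.mem_insert_of_mem (Finset.mem_image_of_mem _ hA)
  exact (hA_lt _ (hz _ hB).2).not_gt (hw'lt _ hB)

end ConvexSupport

theorem ae_exists_mem_of_iIndepFun_of_identDistrib {Ω α : Type*} [MeasurableSpace Ω]
    [MeasurableSpace α] {P : Measure Ω} [IsProbabilityMeasure P] {Xs : ℕ → Ω → α} {X : Ω → α}
    (hindep : iIndepFun Xs P) (hident : ∀ i, IdentDistrib (Xs i) X P P) {S : Set α}
    (hS : MeasurableSet S) (hpos : 0 < P (X ⁻¹' S)) :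
    ∀ᵐ ω ∂P, ∃ i, Xs i ω ∈ S := by
  have hq : P (X ⁻¹' Sᶜ) < 1 := by
    rw [preimage_compl,
      prob_compl_eq_one_sub₀ ((hident 0).aemeasurable_snd.nullMeasurableSet_preimage hS)]
    exact ENNReal.sub_lt_self ENNReal.one_ne_top one_ne_zero hpos.ne'
  have hle : ∀ M, P (⋂ i, Xs i ⁻¹' Sᶜ) ≤ P (X ⁻¹' Sᶜ) ^ M := fun M => calc
    P (⋂ i, Xs i ⁻¹' Sᶜ) ≤ P (⋂ i ∈ Finset.range M, Xs i ⁻¹' Sᶜ) :=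
        measure_mono fun ω hω => mem_iInter₂.2 fun i _ => mem_iInter.1 hω i
    _ = ∏ i ∈ Finset.range M, P (Xs i ⁻¹' Sᶜ) :=
        hindep.meas_biInter fun i _ => ⟨Sᶜ, hS.compl, rfl⟩
    _ = P (X ⁻¹' Sᶜ) ^ M := by
        rw [Finset.prod_congr rfl fun i _ => (hident i).measure_mem_eq hS.compl,
          Finset.prod_const, Finset.card_range]
  have hnull : P (⋂ i, Xs i ⁻¹' Sᶜ) = 0 :=
    le_antisymm (ge_of_tendsto' (ENNReal.tendsto_pow_atTop_nhds_zero_of_lt_one hq) hle) zero_le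
  refine ae_iff.2 (measure_mono_null (fun ω hω => ?_) hnull)
  simpa using hω

theorem monte_carlo_cubature_general {d : ℕ} {𝒳 : Type*} [m𝒳 : MeasurableSpace 𝒳]
    {Ω : Type*} [MeasurableSpace Ω] (P : Measure Ω) [IsProbabilityMeasure P]
    (X : Ω → 𝒳) (Xs : ℕ → Ω → 𝒳)
    (hindep : iIndepFun Xs P)
    (hident : ∀ i, IdentDistrib (Xs i) X P P)
    (φ : 𝒳 → Fin d → ℝ) (hφ : Measurable φ)
    (hint : Integrable (fun ω => φ (X ω)) P) :
    ∀ᵐ ω ∂P, ∃ N : ℕ, 0 < N ∧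
      (∫ ω', φ (X ω') ∂P) ∈ convexHull ℝ ((fun i => φ (Xs i ω)) '' Set.Iio N) := by
  set ν := P.map fun ω => φ (X ω)
  have hφX : AEMeasurable (fun ω => φ (X ω)) P := hint.aemeasurable
  have : IsProbabilityMeasure ν := Measure.isProbabilityMeasure_map hφX
  have hν : Integrable id ν := (integrable_map_measure aestronglyMeasurable_id hφX).2 hint
  have hmean : ∫ x, x ∂ν = ∫ ω, φ (X ω) ∂P := integral_map hφX aestronglyMeasurable_id
  obtain ⟨𝓑, h𝓑, h𝓑_hull⟩ := exists_finset_integral_mem_convexHull ν hν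
  have hhit : ∀ᵐ ω ∂P, ∀ B ∈ 𝓑, ∃ i, φ (Xs i ω) ∈ B := by
    refine (eventually_all_finset 𝓑).2 fun B hB => ?_
    refine ae_exists_mem_of_iIndepFun_of_identDistrib (hindep.comp (fun _ => φ) fun _ => hφ)
      (fun i => (hident i).comp hφ) (h𝓑 B hB).1 ?_
    exact (h𝓑 B hB).2.trans_eq (Measure.map_apply_of_aemeasurable hφX (h𝓑 B hB).1)
  filter_upwards [hhit] with ω hω
  choose! idx hidx using hω
  refine ⟨𝓑.sup idx + 1, Nat.succ_pos _, ?_⟩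
  rw [← hmean]
  refine convexHull_mono ?_ (h𝓑_hull (fun B => φ (Xs (idx B) ω)) hidx)
  rintro _ ⟨B, hB, rfl⟩
  exact ⟨idx B, Nat.lt_succ_of_le (Finset.le_sup hB), rfl⟩

/-- Main theorem (Theorem 3.2): for i.i.d. copies `Xs 0, Xs 1, …` of `X` and a measurable
`φ : 𝒳 → ℝ^d` with `E‖φ(X)‖ < ∞`, almost surely there is a positive integer `N` such that
`E[φ(X)]` lies in the convex hull of `{φ(Xs 0), …, φ(Xs (N-1))}`. -/
theorem monte_carlo_cubature {d : ℕ} {𝒳 : Type*} [m𝒳 : MeasurableSpace 𝒳]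
    {Ω : Type*} [MeasurableSpace Ω] (P : Measure Ω) [IsProbabilityMeasure P]
    (X : Ω → 𝒳) (hX : Measurable X)
    (Xs : ℕ → Ω → 𝒳) (hXs : ∀ i, Measurable (Xs i))
    (hindep : iIndepFun Xs P)
    (hident : ∀ i, IdentDistrib (Xs i) X P P)
    (φ : 𝒳 → Fin d → ℝ) (hφ : Measurable φ)
    (hint : Integrable (fun ω => φ (X ω)) P) :
    ∀ᵐ ω ∂P, ∃ N : ℕ, 0 < N ∧
      (∫ ω', φ (X ω') ∂P) ∈ convexHull ℝ ((fun i => φ (Xs i ω)) '' Set.Iio N) :=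
  monte_carlo_cubature_general (m𝒳 := m𝒳) P X Xs hindep hident φ hφ hint
end

section
/- Let X₁, X₂, … be i.i.d. copies of a random variable X in a measurable space 𝒳 and φ : 𝒳 → ℝ^d measurable with E[‖φ(X)‖] < ∞. Define N* = min{n : E[φ(X)] ∈ conv{φ(X₁),…,φ(Xₙ)}} (with N* = ∞ if no such n exists). Then E[N*] < ∞. -/
/-!
Let `μ = E[Y]` and let `W` be the space of functionals vanishing almost surely on `Y - μ`, so
that the samples almost surely lie in the affine subspace `{y | ∀ w ∈ W, w (y - μ) = 0}`. A unit
functional `g` of a complement `U` of `W` has mean zero on `Y - μ` without vanishing almost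
surely, so with positive probability `Y` falls into a bounded cap on which `g (· - μ) ≥ t > 0`,
and every functional close enough to `g` is still positive there. By compactness of the unit
sphere of `U`, finitely many such caps suffice: a finite set in the affine subspace meeting all of
them has, for every functional, a point where it is at least its value at `μ`, so by Hahn–Banach
it contains `μ` in its convex hull. Hence `N*` is at most the sum of the hitting times of the caps,
each of which is geometric with finite mean.
-/

open MeasureTheory ProbabilityTheory Metric Set
open scoped ENNReal

lemma mem_convexHull_of_forall_exists_le {E : Type*} [TopologicalSpace E] [AddCommGroup E]
    [Module ℝ E] [IsTopologicalAddGroup E] [ContinuousSMul ℝ E] [LocallyConvexSpace ℝ E]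
    [T2Space E] {F : Set E} (hF : F.Finite) {μ : E}
    (h : ∀ f : StrongDual ℝ E, ∃ z ∈ F, f μ ≤ f z) : μ ∈ convexHull ℝ F := by
  by_contra hμ
  obtain ⟨f, u, hFu, huμ⟩ :=
    geometric_hahn_banach_closed_point (convex_convexHull ℝ F) (hF.isClosed_convexHull ℝ) hμ
  obtain ⟨z, hz, hμz⟩ := h f
  exact lt_irrefl u ((huμ.trans_le hμz).trans (hFu z (subset_convexHull ℝ F hz)))

lemma sInf_natCast_le_tsum_indicator (p : ℕ → Prop) :
    sInf {r : ℝ≥0∞ | ∃ n : ℕ, r = n ∧ p n} ≤ ∑' n, {n | ¬ p n}.indicator 1 n := by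
  classical
  by_cases h : ∃ n, p n
  · calc sInf {r : ℝ≥0∞ | ∃ n : ℕ, r = n ∧ p n}
        ≤ Nat.find h := sInf_le ⟨_, rfl, Nat.find_spec h⟩
      _ = ∑ n ∈ Finset.range (Nat.find h), {n | ¬ p n}.indicator 1 n := by
        rw [Finset.sum_congr rfl fun n hn => indicator_of_mem
          (Nat.find_min h (Finset.mem_range.1 hn)) 1]
        simp
      _ ≤ _ := ENNReal.sum_le_tsum _
  · have hone (n : ℕ) : {n | ¬ p n}.indicator (1 : ℕ → ℝ≥0∞) n = 1 :=
      indicator_of_mem (s := {n | ¬ p n}) (fun hn => h ⟨n, hn⟩) 1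
    simp [hone]

/-- The number of samples up to and including the first one in `B` (`⊤` if there is none), as the
tail sum `∑ n, 1{the first n samples all miss B}`. -/
noncomputable def hitTime {Ω α : Type*} (Ys : ℕ → Ω → α) (B : Set α) (ω : Ω) : ℝ≥0∞ :=
  ∑' n, (⋂ j ∈ Finset.range n, Ys j ⁻¹' Bᶜ).indicator 1 ω

section HitTime

variable {Ω α : Type*} [MeasurableSpace Ω] [MeasurableSpace α] {P : Measure Ω}
  {Y : Ω → α} {Ys : ℕ → Ω → α} {B : Set α}

lemma measure_biInter_preimage_compl_eq_pow (hindep : iIndepFun Ys P)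
    (hident : ∀ i, IdentDistrib (Ys i) Y P P) (hB : MeasurableSet B) (n : ℕ) :
    P (⋂ j ∈ Finset.range n, Ys j ⁻¹' Bᶜ) = P (Y ⁻¹' Bᶜ) ^ n := by
  rw [hindep.meas_biInter fun j _ => ⟨Bᶜ, hB.compl, rfl⟩,
    Finset.prod_congr rfl fun j _ => (hident j).measure_mem_eq hB.compl, Finset.prod_const,
    Finset.card_range]

lemma measurable_hitTime (hYs : ∀ i, Measurable (Ys i)) (hB : MeasurableSet B) :
    Measurable (hitTime Ys B) :=
  Measurable.tsum fun _ =>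
    measurable_one.indicator (Finset.measurableSet_biInter _ fun j _ => hYs j hB.compl)

lemma lintegral_hitTime [IsProbabilityMeasure P] (hYs : ∀ i, Measurable (Ys i))
    (hindep : iIndepFun Ys P) (hident : ∀ i, IdentDistrib (Ys i) Y P P) (hB : MeasurableSet B) :
    ∫⁻ ω, hitTime Ys B ω ∂P = (P (Y ⁻¹' B))⁻¹ := by
  have hmiss (n : ℕ) : MeasurableSet (⋂ j ∈ Finset.range n, Ys j ⁻¹' Bᶜ) :=
    Finset.measurableSet_biInter _ fun j _ => hYs j hB.compl
  have hYB : NullMeasurableSet (Y ⁻¹' B) P :=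
    (hident 0).aemeasurable_snd.nullMeasurableSet_preimage hB
  simp_rw [hitTime]
  rw [lintegral_tsum fun n => (measurable_one.indicator (hmiss n)).aemeasurable]
  simp_rw [lintegral_indicator_one (hmiss _),
    measure_biInter_preimage_compl_eq_pow hindep hident hB, ENNReal.tsum_geometric,
    preimage_compl, prob_compl_eq_one_sub₀ hYB,
    ENNReal.sub_sub_cancel ENNReal.one_ne_top prob_le_one]

end HitTime

lemma sInf_mem_convexHull_le_sum_hitTime {Ω E : Type*} [AddCommGroup E] [Module ℝ E]
    {μ : E} {A : Set E} {C : Finset (Set E)}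
    (hconv : ∀ F : Set E, F.Finite → F ⊆ A → (∀ c ∈ C, (F ∩ c).Nonempty) →
      μ ∈ convexHull ℝ F)
    {Ys : ℕ → Ω → E} {ω : Ω} (hω : ∀ j, Ys j ω ∈ A) :
    sInf {r : ℝ≥0∞ | ∃ n : ℕ, r = n ∧ μ ∈ convexHull ℝ ((fun i => Ys i ω) '' Iio n)} ≤
      ∑ c ∈ C, hitTime Ys c ω := by
  refine (sInf_natCast_le_tsum_indicator _).trans ?_
  simp only [hitTime]
  rw [← Summable.tsum_finsetSum fun _ _ => ENNReal.summable]
  refine ENNReal.tsum_le_tsum fun n => ?_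
  by_cases hn : μ ∈ convexHull ℝ ((fun i => Ys i ω) '' Iio n)
  · simp [hn]
  obtain ⟨c, hc, hmiss⟩ : ∃ c ∈ C, ω ∈ ⋂ j ∈ Finset.range n, Ys j ⁻¹' cᶜ := by
    by_contra! hhit
    refine hn (hconv _ ((finite_Iio n).image _) ?_ fun c hc => ?_)
    · rintro _ ⟨j, -, rfl⟩
      exact hω j
    · obtain ⟨j, hj, hjc⟩ : ∃ j < n, Ys j ω ∈ c := by simpa using hhit c hc
      exact ⟨_, ⟨j, hj, rfl⟩, hjc⟩
  calc _ = (1 : ℝ≥0∞) := indicator_of_mem (s := {n | ¬ _}) hn 1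
    _ = (⋂ j ∈ Finset.range n, Ys j ⁻¹' cᶜ).indicator 1 ω :=
      (indicator_of_mem hmiss 1).symm
    _ ≤ _ := Finset.single_le_sum (f := fun c =>
        (⋂ j ∈ Finset.range n, Ys j ⁻¹' cᶜ).indicator (1 : Ω → ℝ≥0∞) ω)
      (fun _ _ => zero_le) hc

section Caps

variable {E : Type*} [NormedAddCommGroup E] [NormedSpace ℝ E]

def halfspaceCap (μ : E) (g : StrongDual ℝ E) (t R : ℝ) : Set E :=
  {y | t ≤ g (y - μ)} ∩ closedBall μ R

lemma isClosed_halfspaceCap (μ : E) (g : StrongDual ℝ E) (t R : ℝ) :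
    IsClosed (halfspaceCap μ g t R) :=
  (isClosed_le continuous_const (g.continuous.comp (continuous_sub_right μ))).inter
    isClosed_closedBall

lemma pos_of_mem_halfspaceCap {μ y : E} {g i : StrongDual ℝ E} {t R : ℝ}
    (hy : y ∈ halfspaceCap μ i t R) (hgi : ‖g - i‖ * R < t) : 0 < g (y - μ) := by
  obtain ⟨hty : t ≤ i (y - μ), hyR⟩ := hy
  rw [mem_closedBall_iff_norm] at hyR
  have herr : |(g - i) (y - μ)| ≤ ‖g - i‖ * R :=
    ((g - i).le_opNorm _).trans (by gcongr)
  have hsplit : g (y - μ) = i (y - μ) + (g - i) (y - μ) := by simp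
  linarith [neg_abs_le ((g - i) (y - μ))]

lemma exists_mem_pos_of_inter_halfspaceCap_nonempty {μ : E}
    {U : Submodule ℝ (StrongDual ℝ E)} {I : Finset (StrongDual ℝ E)} {t R : StrongDual ℝ E → ℝ}
    (hcover : ∀ g ∈ U, ‖g‖ = 1 → ∃ i ∈ I, ‖g - i‖ * R i < t i) {F : Set E}
    (hF : ∀ i ∈ I, (F ∩ halfspaceCap μ i (t i) (R i)).Nonempty) {g : StrongDual ℝ E}
    (hgU : g ∈ U) (hg : g ≠ 0) : ∃ z ∈ F, 0 < g (z - μ) := by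
  have hnorm : 0 < ‖g‖ := norm_pos_iff.2 hg
  obtain ⟨i, hi, hgi⟩ := hcover (‖g‖⁻¹ • g) (U.smul_mem _ hgU) (by
    rw [norm_smul, norm_inv, norm_norm, inv_mul_cancel₀ hnorm.ne'])
  obtain ⟨z, hzF, hz⟩ := hF i hi
  have hpos := pos_of_mem_halfspaceCap hz hgi
  rw [smul_apply, smul_eq_mul] at hpos
  exact ⟨z, hzF, pos_of_mul_pos_right hpos (inv_nonneg.2 hnorm.le)⟩

lemma exists_mem_le_of_inter_halfspaceCap_nonempty {μ : E}
    {W U : Submodule ℝ (StrongDual ℝ E)} (hWU : IsCompl W U)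
    {I : Finset (StrongDual ℝ E)} {t R : StrongDual ℝ E → ℝ}
    (hcover : ∀ g ∈ U, ‖g‖ = 1 → ∃ i ∈ I, ‖g - i‖ * R i < t i) {F : Set E} (hFne : F.Nonempty)
    (hFW : ∀ z ∈ F, ∀ w ∈ W, w (z - μ) = 0)
    (hF : ∀ i ∈ I, (F ∩ halfspaceCap μ i (t i) (R i)).Nonempty) (f : StrongDual ℝ E) :
    ∃ z ∈ F, f μ ≤ f z := by
  have hf : f ∈ W ⊔ U := hWU.sup_eq_top ▸ Submodule.mem_top
  obtain ⟨w, hw, g, hgU, rfl⟩ := Submodule.mem_sup.1 hf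
  suffices ∃ z ∈ F, 0 ≤ (w + g) (z - μ) by simpa only [map_sub, sub_nonneg] using this
  rcases eq_or_ne g 0 with rfl | hg
  · obtain ⟨z, hz⟩ := hFne
    exact ⟨z, hz, by simp [hFW z hz w hw]⟩
  · obtain ⟨z, hz, hgz⟩ := exists_mem_pos_of_inter_halfspaceCap_nonempty hcover hF hgU hg
    exact ⟨z, hz, by simpa [hFW z hz w hw] using hgz.le⟩

end Caps

section Annihilator

variable {Ω E : Type*} [MeasurableSpace Ω] [NormedAddCommGroup E] [NormedSpace ℝ E]
  {P : Measure Ω}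

def aeAnnihilator (P : Measure Ω) (Z : Ω → E) : Submodule ℝ (StrongDual ℝ E) where
  carrier := {f | ∀ᵐ ω ∂P, f (Z ω) = 0}
  add_mem' {f g} (hf : ∀ᵐ ω ∂P, f (Z ω) = 0) (hg : ∀ᵐ ω ∂P, g (Z ω) = 0) :=
    (hf.and hg).mono fun ω h => by simp [h.1, h.2]
  zero_mem' := by simp
  smul_mem' c f (hf : ∀ᵐ ω ∂P, f (Z ω) = 0) := hf.mono fun ω h => by simp [h]

lemma ae_forall_mem_aeAnnihilator [FiniteDimensional ℝ E] (Z : Ω → E) :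
    ∀ᵐ ω ∂P, ∀ w ∈ aeAnnihilator P Z, w (Z ω) = 0 := by
  obtain ⟨S, hS⟩ := IsNoetherian.noetherian (aeAnnihilator P Z)
  have hSae : ∀ᵐ ω ∂P, ∀ w ∈ S, w (Z ω) = 0 :=
    S.eventually_all.2 fun w hw => (hS ▸ Submodule.subset_span hw : w ∈ aeAnnihilator P Z)
  filter_upwards [hSae] with ω hω w hw
  rw [← hS] at hw
  induction hw using Submodule.span_induction with
  | mem w hw => exact hω w hw
  | zero => simp
  | add w w' _ _ hw hw' => simp [hw, hw']
  | smul c w _ hw => simp [hw]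

lemma measure_pos_setOf_pos_of_integral_eq_zero {h : Ω → ℝ} (hh : Integrable h P)
    (h0 : ∫ ω, h ω ∂P = 0) (hne : ¬ h =ᵐ[P] 0) : 0 < P {ω | 0 < h ω} := by
  refine pos_iff_ne_zero.2 fun hpos => hne ?_
  have hnonpos : 0 ≤ᵐ[P] -h := by
    rw [Filter.EventuallyLE, ae_iff]
    simpa using hpos
  have hneg := (integral_eq_zero_iff_of_nonneg_ae hnonpos hh.neg).1
    (by rw [Pi.neg_def, integral_neg, h0, neg_zero])
  filter_upwards [hneg] with ω hω
  simpa using hω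

lemma exists_halfspaceCap_measure_pos {Y : Ω → E} {μ : E} {g : StrongDual ℝ E}
    (hg : 0 < P {ω | 0 < g (Y ω - μ)}) :
    ∃ t R, 0 < t ∧ 0 < R ∧ 0 < P (Y ⁻¹' halfspaceCap μ g t R) := by
  have hcover : {ω | 0 < g (Y ω - μ)} ⊆
      ⋃ k : ℕ, Y ⁻¹' halfspaceCap μ g ((k : ℝ) + 1)⁻¹ ((k : ℝ) + 1) := by
    intro ω (hω : 0 < g (Y ω - μ))
    obtain ⟨k, hk⟩ := exists_nat_gt (max (g (Y ω - μ))⁻¹ ‖Y ω - μ‖)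
    rw [max_lt_iff] at hk
    refine mem_iUnion.2 ⟨k, ?_, ?_⟩
    · exact inv_le_of_inv_le₀ hω (by linarith)
    · rw [mem_closedBall_iff_norm]
      linarith
  obtain ⟨k, hk⟩ := exists_measure_pos_of_not_measure_iUnion_null
    (pos_iff_ne_zero.1 (hg.trans_le (measure_mono hcover)))
  exact ⟨_, _, by positivity, by positivity, hk⟩

lemma measure_pos_of_not_mem_aeAnnihilator [CompleteSpace E] [IsProbabilityMeasure P]
    {Y : Ω → E} (hY : Integrable Y P) {g : StrongDual ℝ E}
    (hg : g ∉ aeAnnihilator P fun ω => Y ω - ∫ ω', Y ω' ∂P) :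
    0 < P {ω | 0 < g (Y ω - ∫ ω', Y ω' ∂P)} := by
  refine measure_pos_setOf_pos_of_integral_eq_zero ?_ ?_ hg
  · simp only [map_sub]
    exact (g.integrable_comp hY).sub (integrable_const _)
  · simp only [map_sub]
    rw [integral_sub (g.integrable_comp hY) (integrable_const _), g.integral_comp_comm hY]
    simp

end Annihilator

theorem exists_finset_forall_mem_convexHull {Ω E : Type*} [MeasurableSpace Ω]
    [NormedAddCommGroup E] [NormedSpace ℝ E] [FiniteDimensional ℝ E] {P : Measure Ω}
    [IsProbabilityMeasure P] {Y : Ω → E} (hY : Integrable Y P) :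
    ∃ (A : Set E) (C : Finset (Set E)), IsClosed A ∧ (∀ᵐ ω ∂P, Y ω ∈ A) ∧
      (∀ c ∈ C, IsClosed c ∧ 0 < P (Y ⁻¹' c)) ∧
      ∀ F : Set E, F.Finite → F ⊆ A → (∀ c ∈ C, (F ∩ c).Nonempty) →
        (∫ ω, Y ω ∂P) ∈ convexHull ℝ F := by
  set μ := ∫ ω, Y ω ∂P
  set W := aeAnnihilator P fun ω => Y ω - μ
  obtain ⟨U, hWU⟩ := W.exists_isCompl
  set K := (U : Set (StrongDual ℝ E)) ∩ sphere 0 1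
  have hcap : ∀ g ∈ K, ∃ t R, 0 < t ∧ 0 < R ∧ 0 < P (Y ⁻¹' halfspaceCap μ g t R) := by
    rintro g ⟨hgU, hg1⟩
    have hgW : g ∉ W := fun hgW => ne_zero_of_mem_sphere one_ne_zero ⟨g, hg1⟩ <|
      Submodule.disjoint_def.1 hWU.disjoint g hgW hgU
    exact exists_halfspaceCap_measure_pos (measure_pos_of_not_mem_aeAnnihilator hY hgW)
  choose! t R ht hR hPcap using hcap
  have hK : IsCompact K := (isCompact_sphere 0 1).inter_left U.closed_of_finiteDimensional
  obtain ⟨I, hIK, hIcover⟩ := hK.elim_nhds_subcover (fun g => ball g (t g / R g))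
    fun g hg => ball_mem_nhds g (div_pos (ht g hg) (hR g hg))
  have hcover : ∀ g ∈ U, ‖g‖ = 1 → ∃ i ∈ I, ‖g - i‖ * R i < t i := by
    intro g hgU hg1
    obtain ⟨i, hi, hgi⟩ := mem_iUnion₂.1 (hIcover ⟨hgU, mem_sphere_zero_iff_norm.2 hg1⟩)
    exact ⟨i, hi, (lt_div_iff₀ (hR i (hIK i hi))).1 (mem_ball_iff_norm.1 hgi)⟩
  -- `univ` is among the sets only to force `F` to be nonempty.
  refine ⟨{y | ∀ w ∈ W, w (y - μ) = 0},
    insert univ (I.image fun i => halfspaceCap μ i (t i) (R i)),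
    ?_, ae_forall_mem_aeAnnihilator _, ?_, fun F hF hFA hFC => ?_⟩
  · simp only [ofPred_forall]
    exact isClosed_biInter fun w _ =>
      isClosed_eq (w.continuous.comp (continuous_sub_right μ)) continuous_const
  · simp only [Finset.forall_mem_insert, Finset.forall_mem_image]
    exact ⟨⟨isClosed_univ, by simp⟩,
      fun i hi => ⟨isClosed_halfspaceCap _ _ _ _, hPcap i (hIK i hi)⟩⟩
  · refine mem_convexHull_of_forall_exists_le hF
      (exists_mem_le_of_inter_halfspaceCap_nonempty hWU hcover ?_ hFA fun i hi => ?_)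
    · simpa using hFC univ (Finset.mem_insert_self _ _)
    · exact hFC _ (Finset.mem_insert_of_mem (Finset.mem_image_of_mem _ hi))

theorem lintegral_sInf_mem_convexHull_lt_top {Ω E : Type*} [MeasurableSpace Ω]
    [NormedAddCommGroup E] [NormedSpace ℝ E] [FiniteDimensional ℝ E] [MeasurableSpace E]
    [BorelSpace E] {P : Measure Ω} [IsProbabilityMeasure P] {Y : Ω → E} {Ys : ℕ → Ω → E}
    (hYs : ∀ i, Measurable (Ys i)) (hindep : iIndepFun Ys P)
    (hident : ∀ i, IdentDistrib (Ys i) Y P P) (hY : Integrable Y P) :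
    ∫⁻ ω, sInf {r : ℝ≥0∞ | ∃ n : ℕ, r = n ∧
        (∫ ω', Y ω' ∂P) ∈ convexHull ℝ ((fun i => Ys i ω) '' Iio n)} ∂P < ⊤ := by
  obtain ⟨A, C, hA, hYA, hC, hconv⟩ := exists_finset_forall_mem_convexHull hY
  have hYsA : ∀ᵐ ω ∂P, ∀ j, Ys j ω ∈ A :=
    ae_all_iff.2 fun j => (hident j).symm.ae_mem_snd hA.measurableSet hYA
  calc _ ≤ ∫⁻ ω, ∑ c ∈ C, hitTime Ys c ω ∂P :=
        lintegral_mono_ae (hYsA.mono fun ω hω => sInf_mem_convexHull_le_sum_hitTime hconv hω)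
    _ = ∑ c ∈ C, (P (Y ⁻¹' c))⁻¹ := by
      rw [lintegral_finsetSum _ fun c hc => measurable_hitTime hYs (hC c hc).1.measurableSet]
      exact Finset.sum_congr rfl fun c hc =>
        lintegral_hitTime hYs hindep hident (hC c hc).1.measurableSet
    _ < ⊤ := ENNReal.sum_lt_top.2 fun c hc => ENNReal.inv_lt_top.2 (hC c hc).2

theorem monte_carlo_cubature_stopping_time_integrable_general {d : ℕ} {𝒳 : Type*}
    [m𝒳 : MeasurableSpace 𝒳]
    {Ω : Type*} [MeasurableSpace Ω] (P : Measure Ω) [IsProbabilityMeasure P]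
    (X : Ω → 𝒳)
    (Xs : ℕ → Ω → 𝒳) (hXs : ∀ i, Measurable (Xs i))
    (hindep : iIndepFun Xs P)
    (hident : ∀ i, IdentDistrib (Xs i) X P P)
    (φ : 𝒳 → Fin d → ℝ) (hφ : Measurable φ)
    (hint : Integrable (fun ω => φ (X ω)) P) :
    ∫⁻ ω, sInf {r : ENNReal | ∃ n : ℕ, r = n ∧
        (∫ ω', φ (X ω') ∂P) ∈ convexHull ℝ ((fun i => φ (Xs i ω)) '' Set.Iio n)} ∂P
      < ⊤ :=
  lintegral_sInf_mem_convexHull_lt_top (fun i => hφ.comp (hXs i))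
    (hindep.comp (fun _ => φ) fun _ => hφ) (fun i => (hident i).comp hφ) hint

/-- The stopping index `N* = min {n : E[φ(X)] ∈ conv {φ(X_1), …, φ(X_n)}}` (valued in
`ℝ≥0∞`, equal to `⊤ = ∞` if no such `n` exists) has finite expectation. -/
theorem monte_carlo_cubature_stopping_time_integrable {d : ℕ} {𝒳 : Type*}
    [m𝒳 : MeasurableSpace 𝒳]
    {Ω : Type*} [MeasurableSpace Ω] (P : Measure Ω) [IsProbabilityMeasure P]
    (X : Ω → 𝒳) (hX : Measurable X)
    (Xs : ℕ → Ω → 𝒳) (hXs : ∀ i, Measurable (Xs i))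
    (hindep : iIndepFun Xs P)
    (hident : ∀ i, IdentDistrib (Xs i) X P P)
    (φ : 𝒳 → Fin d → ℝ) (hφ : Measurable φ)
    (hint : Integrable (fun ω => φ (X ω)) P) :
    ∫⁻ ω, sInf {r : ENNReal | ∃ n : ℕ, r = n ∧
        (∫ ω', φ (X ω') ∂P) ∈ convexHull ℝ ((fun i => φ (Xs i ω)) '' Set.Iio n)} ∂P
      < ⊤ :=
  monte_carlo_cubature_stopping_time_integrable_general (m𝒳 := m𝒳) P X Xs hXs hindep hident φ hφ
    hint
end

section
/- Let T = {x₁,…,x_k} ⊆ ℝ^d, let p be a point such that the closed ball B of radius r > 0 around p within aff T is contained in conv T. If points y₁,…,y_k satisfy ‖yᵢ − xᵢ‖ < r for all i and all yᵢ lie in aff T, then p ∈ conv{y₁,…,y_k}. -/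
/-!
If `p` were outside `conv y`, let `v` be its nearest point there. Then `u = p - v` lies in the
direction of `aff T`, and `conv y` lies in the half-space `⟪u, · - v⟫ ≤ 0`. Moving every vertex by
less than `r` moves this half-space by at most `r ‖u‖`, so `conv T` lies in `⟪u, · - v⟫ ≤ r ‖u‖`;
but the point `p + (r / ‖u‖) u` of the relative ball does not.
-/

open Set Metric AffineMap
open scoped RealInnerProductSpace

section

variable {E : Type*} [NormedAddCommGroup E] [InnerProductSpace ℝ E] {ι : Type*}

theorem convexHull_range_subset_inner_le {x : ι → E} {u : E} {c : ℝ} (h : ∀ i, ⟪u, x i⟫ ≤ c) :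
    convexHull ℝ (range x) ⊆ {z | ⟪u, z⟫ ≤ c} :=
  convexHull_min (range_subset_iff.2 h) (convex_halfSpace_le (innerₛₗ ℝ u).isLinear c)

theorem inner_sub_le_of_forall_dist_lt {x y : ι → E} {u v : E} {r : ℝ}
    (hy : ∀ i, dist (y i) (x i) < r) (hv : ∀ i, ⟪u, y i - v⟫ ≤ 0) :
    ∀ z ∈ convexHull ℝ (range x), ⟪u, z - v⟫ ≤ r * ‖u‖ := by
  have hx : ∀ i, ⟪u, x i⟫ ≤ ⟪u, v⟫ + r * ‖u‖ := fun i => by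
    have hxy : ⟪u, x i - y i⟫ ≤ r * ‖u‖ := calc
      ⟪u, x i - y i⟫ ≤ ‖u‖ * ‖x i - y i‖ := real_inner_le_norm _ _
      _ ≤ ‖u‖ * r := by gcongr; rw [← dist_eq_norm, dist_comm]; exact (hy i).le
      _ = r * ‖u‖ := mul_comm _ _
    have := hv i
    rw [inner_sub_right] at hxy this
    linarith
  intro z hz
  have hz' : ⟪u, z⟫ ≤ ⟪u, v⟫ + r * ‖u‖ := convexHull_range_subset_inner_le hx hz
  rw [inner_sub_right]
  linarith

theorem mem_convexHull_of_forall_dist_lt [Finite ι] {x y : ι → E} {S : AffineSubspace ℝ E}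
    {p : E} {r : ℝ} (hp : p ∈ S) (hr : 0 ≤ r)
    (hball : (S : Set E) ∩ closedBall p r ⊆ convexHull ℝ (range x))
    (hy : ∀ i, dist (y i) (x i) < r) (hyS : ∀ i, y i ∈ S) :
    p ∈ convexHull ℝ (range y) := by
  set K := convexHull ℝ (range y)
  have hK : K.Nonempty := by
    obtain ⟨-, i, -⟩ := convexHull_nonempty_iff.1 ⟨p, hball ⟨hp, mem_closedBall_self hr⟩⟩
    exact ⟨y i, subset_convexHull ℝ _ (mem_range_self i)⟩
  have hKc : IsComplete K := ((finite_range y).isCompact_convexHull ℝ).isComplete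
  obtain ⟨v, hvK, hv⟩ := exists_norm_eq_iInf_of_complete_convex hK hKc (convex_convexHull ℝ _) p
  rw [norm_eq_iInf_iff_real_inner_le_zero (convex_convexHull ℝ _) hvK] at hv
  by_contra hpK
  have hu : 0 < ‖p - v‖ := norm_pos_iff.2 (sub_ne_zero.2 fun h => hpK (h ▸ hvK))
  have hvS : v ∈ S := (convexHull_subset_affineSpan _).trans
    (affineSpan_le.2 (range_subset_iff.2 hyS)) hvK
  set t := 1 + r / ‖p - v‖
  have hq : lineMap v p t ∈ convexHull ℝ (range x) := by
    refine hball ⟨lineMap_mem t hvS hp, ?_⟩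
    have ht : t - 1 = r / ‖p - v‖ := add_sub_cancel_left _ _
    rw [mem_closedBall, dist_lineMap_right, norm_sub_rev, ht, Real.norm_of_nonneg (by positivity),
      dist_eq_norm', div_mul_cancel₀ _ hu.ne']
  have hqv : lineMap v p t - v = t • (p - v) := lineMap_vsub_left v p t
  have hfar := inner_sub_le_of_forall_dist_lt hy
    (fun i => hv _ (subset_convexHull ℝ _ (mem_range_self i))) _ hq
  rw [hqv, real_inner_smul_right, real_inner_self_eq_norm_sq] at hfar
  have ht : t * ‖p - v‖ ^ 2 = ‖p - v‖ ^ 2 + r * ‖p - v‖ := by simp only [t]; field_simp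
  linarith [pow_pos hu 2]

end

/-- Perturbation stability lemma: if the closed ball of radius `r > 0` around `p`
within `aff T` is contained in `conv T` for `T = {x 1, …, x k}`, and each `y i` lies
in `aff T` with `‖y i - x i‖ < r`, then `p ∈ conv {y 1, …, y k}`. -/
theorem convexHull_perturbation {d k : ℕ} (x : Fin k → EuclideanSpace ℝ (Fin d))
    (p : EuclideanSpace ℝ (Fin d)) (hp : p ∈ affineSpan ℝ (Set.range x)) (r : ℝ) (hr : 0 < r)
    (hball : {z : EuclideanSpace ℝ (Fin d) |
        z ∈ affineSpan ℝ (Set.range x) ∧ ‖z - p‖ ≤ r} ⊆ convexHull ℝ (Set.range x))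
    (y : Fin k → EuclideanSpace ℝ (Fin d))
    (hy : ∀ i, ‖y i - x i‖ < r)
    (hyaff : ∀ i, y i ∈ affineSpan ℝ (Set.range x)) :
    p ∈ convexHull ℝ (Set.range y) :=
  mem_convexHull_of_forall_dist_lt hp hr.le
    (fun z ⟨hzS, hz⟩ => hball ⟨hzS, by rwa [← dist_eq_norm]⟩)
    (fun i => (dist_eq_norm _ _).trans_lt (hy i)) hyaff
end

section
/- Let μ̂ = Σ_{x∈F} a_x δ_x be a discrete probability measure on a set 𝒳 with F finite and a_x > 0, and let φ₁,…,φ_d : 𝒳 → ℝ with φ₁ ≡ 1. Then there exist G ⊆ F with |G| ≤ d and weights b_x > 0 for x ∈ G such that Σ_{x∈G} b_x φᵢ(x) = Σ_{x∈F} a_x φᵢ(x) for all i = 1,…,d; in particular Σ_{x∈G} b_x = 1. -/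
/-- Carathéodory–Tchakaloff subsampling of a discrete probability measure
`μ̂ = ∑_{x ∈ F} a_x δ_x`: there is a sub-support `G ⊆ F` of at most `d` points and
positive weights matching all the moments of the `d` test functions `φ i`, the first
of which is the constant function `1`; in particular the new weights sum to `1`. -/
theorem caratheodory_tchakaloff_subsampling {d : ℕ} (hd : 0 < d) {𝒳 : Type*}
    [DecidableEq 𝒳] (F : Finset 𝒳) (a : 𝒳 → ℝ)
    (ha : ∀ x ∈ F, 0 < a x) (hsum : ∑ x ∈ F, a x = 1)
    (φ : Fin d → 𝒳 → ℝ) (hφ1 : ∀ x, φ ⟨0, hd⟩ x = 1) :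
    ∃ G : Finset 𝒳, G ⊆ F ∧ G.card ≤ d ∧ ∃ b : 𝒳 → ℝ,
      (∀ x ∈ G, 0 < b x) ∧
      (∀ i : Fin d, ∑ x ∈ G, b x * φ i x = ∑ x ∈ F, a x * φ i x) ∧
      (∑ x ∈ G, b x = 1) := by
  classical
  set v : 𝒳 → (Fin d → ℝ) := fun x i => φ i x with hv
  set p : Fin d → ℝ := ∑ x ∈ F, a x • v x with hp
  have hpmem : p ∈ convexHull ℝ (v '' ↑F) := by
    have := F.centerMass_mem_convexHull (w := a) (fun x hx => (ha x hx).le)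
      (by rw [hsum]; norm_num) (z := v) (fun x hx => Set.mem_image_of_mem v hx)
    rwa [Finset.centerMass, hsum, inv_one, one_smul] at this
  rw [convexHull_eq_union] at hpmem
  simp only [Set.mem_iUnion] at hpmem
  obtain ⟨t, hts, hai, hpt⟩ := hpmem
  -- every element of `t` has first coordinate `1`
  have hone : ∀ y ∈ t, y ⟨0, hd⟩ = 1 := by
    intro y hy
    obtain ⟨x, -, rfl⟩ := hts hy
    exact hφ1 x
  -- the elements of `t` are linearly independent, hence `t.card ≤ d`
  have hli : LinearIndependent ℝ (fun y => (y : Fin d → ℝ) : t → (Fin d → ℝ)) := by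
    rw [linearIndependent_iff']
    intro s g hg i hi
    have h0 : ∑ j ∈ s, g j = 0 := by
      have h := congrFun hg ⟨0, hd⟩
      simp only [Finset.sum_apply, Pi.smul_apply, smul_eq_mul, Pi.zero_apply] at h
      calc ∑ j ∈ s, g j = ∑ j ∈ s, g j * (j : Fin d → ℝ) ⟨0, hd⟩ := by
            refine Finset.sum_congr rfl fun j _ => ?_
            rw [hone _ j.2, mul_one]
        _ = 0 := h
    exact affineIndependent_iff.1 hai s g h0 hg i hi
  have hcardt : t.card ≤ d := by
    have := hli.finset_card_le_finrank
    simpa [Module.finrank_fin_fun] using this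
  -- express `p` as a convex combination of the elements of `t`
  rw [Finset.convexHull_eq] at hpt
  obtain ⟨w, hw0, hw1, hwp⟩ := hpt
  rw [Finset.centerMass, hw1, inv_one, one_smul] at hwp
  simp only [id_eq] at hwp
  -- choose a preimage in `F` for each element of `t`
  have hFne : F.Nonempty := by
    by_contra h
    rw [Finset.not_nonempty_iff_eq_empty] at h
    simp [h] at hsum
  obtain ⟨x₀, hx₀⟩ := hFne
  have hsec : ∀ y : Fin d → ℝ, ∃ x : 𝒳, y ∈ t → x ∈ F ∧ v x = y := by
    intro y
    by_cases hy : y ∈ t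
    · obtain ⟨x, hx, rfl⟩ := hts hy
      exact ⟨x, fun _ => ⟨hx, rfl⟩⟩
    · exact ⟨x₀, fun h => absurd h hy⟩
  choose g hg using hsec
  -- restrict to the positive-weight part
  set t' : Finset (Fin d → ℝ) := t.filter (fun y => 0 < w y) with ht'
  have ht't : t' ⊆ t := Finset.filter_subset _ _
  have hinj : ∀ y₁ ∈ t', ∀ y₂ ∈ t', g y₁ = g y₂ → y₁ = y₂ := by
    intro y₁ h₁ y₂ h₂ he
    rw [← (hg y₁ (ht't h₁)).2, ← (hg y₂ (ht't h₂)).2, he]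
  refine ⟨t'.image g, ?_, ?_, fun x => w (v x), ?_, ?_, ?_⟩
  · intro x hx
    obtain ⟨y, hy, rfl⟩ := Finset.mem_image.1 hx
    exact (hg y (ht't hy)).1
  · calc (t'.image g).card ≤ t'.card := Finset.card_image_le
      _ ≤ t.card := Finset.card_le_card ht't
      _ ≤ d := hcardt
  · intro x hx
    obtain ⟨y, hy, rfl⟩ := Finset.mem_image.1 hx
    show 0 < w (v (g y))
    rw [(hg y (ht't hy)).2]
    exact (Finset.mem_filter.1 hy).2
  · intro i
    have key : ∑ y ∈ t', w y • y = p := by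
      rw [← hwp]
      refine Finset.sum_filter_of_ne fun y hy hne => ?_
      rcases (hw0 y hy).eq_or_lt with h | h
      · exact absurd (by rw [← h, zero_smul]) hne
      · exact h
    have keyi := congrFun key i
    simp only [Finset.sum_apply, Pi.smul_apply, smul_eq_mul] at keyi
    rw [Finset.sum_image hinj]
    calc ∑ y ∈ t', w (v (g y)) * φ i (g y) = ∑ y ∈ t', w y * y i := by
          refine Finset.sum_congr rfl fun y hy => ?_
          conv_rhs => rw [← (hg y (ht't hy)).2]
      _ = p i := keyi
      _ = ∑ x ∈ F, a x * φ i x := by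
          rw [hp, Finset.sum_apply]
          exact Finset.sum_congr rfl fun x _ => rfl
  · rw [Finset.sum_image hinj]
    calc ∑ y ∈ t', w (v (g y)) = ∑ y ∈ t', w y :=
          Finset.sum_congr rfl fun y hy => by rw [(hg y (ht't hy)).2]
      _ = ∑ y ∈ t, w y := Finset.sum_filter_of_ne fun y hy hne =>
          (hw0 y hy).lt_of_ne (Ne.symm hne)
      _ = 1 := hw1
end
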